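/- arXiv:2605.13650 — 2 statements merged into one kernel-verified Lean document; each statement's English description precedes it below -/
import Mathlib

section
/- Let S : (0,∞) → (0,1] be a nonincreasing positive function that is regularly varying at infinity with index −1/γ₁, where γ₁ > 0. Let 0 < p < 1, β > 0, and let t ↦ u_t be a function with u_t/t → ∞ as t → ∞. Then (β/p) · ∫_{1}^{u_t/t} y^{−1} · (S(ty)/S(t))^{β/p} dy → γ₁ as t → ∞. -/
open Filter MeasureTheory

lemma potter_bound (S : ℝ → ℝ) (γ₁ : ℝ) (hγ₁ : 0 < γ₁)
    (hS_pos : ∀ x : ℝ, 0 < x → 0 < S x)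
    (hS_mono : ∀ ⦃x y : ℝ⦄, 0 < x → x ≤ y → S y ≤ S x)
    (hRV : ∀ x : ℝ, 0 < x →
      Tendsto (fun t : ℝ => S (t * x) / S t) atTop (nhds (x ^ (-(1 / γ₁))))) :
    ∃ C : ℝ, 1 ≤ C ∧ ∃ T₀ : ℝ, 1 ≤ T₀ ∧ ∀ t, T₀ ≤ t → ∀ y, 1 ≤ y →
      S (t * y) / S t ≤ C * y ^ (-(1 / (2 * γ₁))) := by
  have hγ₁' : γ₁ ≠ 0 := ne_of_gt hγ₁
  set A : ℝ := (2 : ℝ) ^ (2 * γ₁) with hA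
  have hA1 : 1 < A := by
    rw [hA]
    exact (Real.one_lt_rpow_iff_of_pos (by norm_num)).2 (Or.inl ⟨by norm_num, by positivity⟩)
  have hA0 : 0 < A := lt_trans one_pos hA1
  have h2 : (0:ℝ) ≤ 2 := by norm_num
  set B : ℝ := A ^ (-(1 / (2 * γ₁))) with hB
  have key : 2 * A ^ (-(1 / γ₁)) = B := by
    rw [hB, hA, ← Real.rpow_mul h2, ← Real.rpow_mul h2,
        show 2 * γ₁ * (-(1 / γ₁)) = -2 by field_simp,
        show 2 * γ₁ * (-(1 / (2 * γ₁))) = -1 by field_simp,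
        show ((-2:ℝ)) = ((-2:ℤ):ℝ) by norm_num, show ((-1:ℝ)) = ((-1:ℤ):ℝ) by norm_num,
        Real.rpow_intCast, Real.rpow_intCast]
    norm_num
  have hL : 0 < A ^ (-(1 / γ₁)) := Real.rpow_pos_of_pos hA0 _
  have ev : ∀ᶠ t : ℝ in atTop, S (t * A) / S t ≤ 2 * A ^ (-(1 / γ₁)) :=
    (hRV A hA0).eventually (eventually_le_nhds (by linarith))
  obtain ⟨T₁, hT₁⟩ := eventually_atTop.1 ev
  set T₀ : ℝ := max T₁ 1 with hT₀
  have hT₀1 : (1:ℝ) ≤ T₀ := le_max_right _ _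
  have claim : ∀ k : ℕ, ∀ t : ℝ, T₀ ≤ t → S (t * A ^ k) / S t ≤ B ^ k := by
    intro k
    induction k with
    | zero =>
      intro t ht
      have htpos : 0 < t := lt_of_lt_of_le one_pos (le_trans hT₀1 ht)
      simp [div_self (ne_of_gt (hS_pos t htpos))]
    | succ k ih =>
      intro t ht
      have htpos : 0 < t := lt_of_lt_of_le one_pos (le_trans hT₀1 ht)
      have hAk : (1:ℝ) ≤ A ^ k := one_le_pow₀ hA1.le
      have hs : T₀ ≤ t * A ^ k := le_trans ht (le_mul_of_one_le_right htpos.le hAk)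
      have hspos : 0 < t * A ^ k := by positivity
      have hSb := hS_pos _ hspos
      have hSt := hS_pos t htpos
      have h1 : S (t * A ^ (k+1)) / S t
          = (S (t * A ^ k * A) / S (t * A ^ k)) * (S (t * A ^ k) / S t) := by
        rw [pow_succ, ← mul_assoc]
        field_simp
      rw [h1, pow_succ']
      have hfac : S (t * A ^ k * A) / S (t * A ^ k) ≤ B := by
        rw [← key]; exact hT₁ _ (le_trans (le_max_left _ _) hs)
      have hpos1 : 0 ≤ S (t * A ^ k * A) / S (t * A ^ k) :=
        div_nonneg (hS_pos _ (by positivity)).le hSb.le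
      have hpos2 : 0 ≤ S (t * A ^ k) / S t := div_nonneg hSb.le hSt.le
      have hB0 : 0 ≤ B := (Real.rpow_pos_of_pos hA0 _).le
      exact mul_le_mul hfac (ih t ht) hpos2 hB0
  -- now the general bound
  refine ⟨A ^ (1/(2*γ₁)), ?_, T₀, hT₀1, ?_⟩
  · have : A ^ (0:ℝ) ≤ A ^ (1/(2*γ₁)) := (Real.rpow_le_rpow_left_iff hA1).2 (by positivity)
    rwa [Real.rpow_zero] at this
  intro t ht y hy
  have htpos : 0 < t := lt_of_lt_of_le one_pos (le_trans hT₀1 ht)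
  have hypos : 0 < y := lt_of_lt_of_le one_pos hy
  set k : ℕ := ⌊Real.logb A y⌋₊ with hk
  have hlogb0 : 0 ≤ Real.logb A y := Real.logb_nonneg hA1 hy
  have hAky : A ^ ((k:ℕ):ℝ) ≤ y := by
    have := (Real.rpow_le_rpow_left_iff hA1).2 (Nat.floor_le hlogb0)
    rwa [Real.rpow_logb hA0 (ne_of_gt hA1) hypos] at this
  have hyAk1 : y ≤ A ^ (((k:ℕ):ℝ) + 1) := by
    have := (Real.rpow_le_rpow_left_iff hA1).2 (Nat.lt_floor_add_one (Real.logb A y)).le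
    rwa [Real.rpow_logb hA0 (ne_of_gt hA1) hypos] at this
  have hAkc : (A:ℝ) ^ (k:ℕ) = A ^ ((k:ℕ):ℝ) := (Real.rpow_natCast A k).symm
  have h1 : S (t * y) ≤ S (t * A ^ k) :=
    hS_mono (by positivity) (by rw [hAkc]; exact mul_le_mul_of_nonneg_left hAky htpos.le)
  have hSt := hS_pos t htpos
  have h2 : S (t * y) / S t ≤ B ^ k := by
    refine le_trans ?_ (claim k t ht)
    exact div_le_div_of_nonneg_right h1 hSt.le
  have h3 : B ^ k = A ^ (-(1/(2*γ₁)) * (k:ℕ)) := by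
    rw [hB, ← Real.rpow_natCast (A ^ (-(1/(2*γ₁)))) k, ← Real.rpow_mul hA0.le]
  have hy' : (A ^ (((k:ℕ):ℝ)+1)) ^ (-(1/(2*γ₁))) ≤ y ^ (-(1/(2*γ₁))) :=
    Real.rpow_le_rpow_of_nonpos hypos hyAk1 (by
      have : 0 < 1/(2*γ₁) := by positivity
      linarith)
  have h4 : A ^ (-(1/(2*γ₁)) * (k:ℕ)) ≤ A ^ (1/(2*γ₁)) * y ^ (-(1/(2*γ₁))) := by
    have e : (A ^ (((k:ℕ):ℝ)+1)) ^ (-(1/(2*γ₁))) = A ^ ((((k:ℕ):ℝ)+1) * (-(1/(2*γ₁)))) :=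
      (Real.rpow_mul hA0.le _ _).symm
    calc A ^ (-(1/(2*γ₁)) * (k:ℕ))
        = A ^ (1/(2*γ₁)) * A ^ ((((k:ℕ):ℝ)+1) * (-(1/(2*γ₁)))) := by
          rw [← Real.rpow_add hA0]; congr 1; ring
      _ ≤ A ^ (1/(2*γ₁)) * y ^ (-(1/(2*γ₁))) := by
          rw [← e]
          exact mul_le_mul_of_nonneg_left hy' (Real.rpow_pos_of_pos hA0 _).le
  exact le_trans h2 (h3 ▸ h4)

/-- **Truncated integral characterization of the extreme value index.**
If a nonincreasing survival function `S : (0,∞) → (0,1]` is regularly varying at infinity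
with index `-1/γ₁` (`γ₁ > 0`), `0 < p < 1`, `β > 0`, and `u_t / t → ∞` as `t → ∞`, then
`(β/p) · ∫_{1}^{u_t/t} y⁻¹ (S(ty)/S(t))^{β/p} dy → γ₁` as `t → ∞`. -/
theorem truncated_integral_identity (S : ℝ → ℝ) (γ₁ : ℝ) (hγ₁ : 0 < γ₁)
    (hS_pos : ∀ x : ℝ, 0 < x → 0 < S x)
    (hS_le_one : ∀ x : ℝ, 0 < x → S x ≤ 1)
    (hS_mono : ∀ ⦃x y : ℝ⦄, 0 < x → x ≤ y → S y ≤ S x)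
    (hRV : ∀ x : ℝ, 0 < x →
      Tendsto (fun t : ℝ => S (t * x) / S t) atTop (nhds (x ^ (-(1 / γ₁)))))
    (p β : ℝ) (hp0 : 0 < p) (hp1 : p < 1) (hβ : 0 < β)
    (u : ℝ → ℝ) (hu : Tendsto (fun t : ℝ => u t / t) atTop atTop) :
    Tendsto
      (fun t : ℝ =>
        (β / p) * ∫ y in Set.Ioo (1 : ℝ) (u t / t), y⁻¹ * (S (t * y) / S t) ^ (β / p))
      atTop (nhds γ₁) := by
  set c : ℝ := β / p with hc
  have hc0 : 0 < c := div_pos hβ hp0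
  set δ : ℝ := 1 / (2 * γ₁) with hδ
  have hδ0 : 0 < δ := by positivity
  -- monotone extension
  set T : ℝ → ℝ := fun x => S (max x 1) with hT
  have hT_anti : Antitone T := fun a b hab =>
    hS_mono (lt_of_lt_of_le one_pos (le_max_right a 1)) (max_le_max hab le_rfl)
  have hT_pos : ∀ x, 0 < T x := fun x => hS_pos _ (lt_of_lt_of_le one_pos (le_max_right x 1))
  have hT_eq : ∀ x : ℝ, 1 ≤ x → T x = S x := fun x hx => by
    simp only [hT, max_eq_left hx]
  obtain ⟨C, hC1, T₀, hT₀1, hPotter⟩ := potter_bound S γ₁ hγ₁ hS_pos hS_mono hRV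
  set F : ℝ → ℝ → ℝ := fun t =>
    (Set.Ioo (1:ℝ) (u t / t)).indicator (fun y => y⁻¹ * (T (t*y) / T t) ^ c) with hF
  set bound : ℝ → ℝ :=
    (Set.Ioi (1:ℝ)).indicator (fun y => C ^ c * y ^ (-(1 + c * δ))) with hbound
  set f : ℝ → ℝ := (Set.Ioi (1:ℝ)).indicator (fun y => y ^ (-(1 + c / γ₁))) with hf
  have hbound_nonneg : ∀ y, 0 ≤ bound y := by
    intro y
    refine Set.indicator_nonneg (fun y hy => ?_) y
    have : (0:ℝ) < y := lt_trans one_pos hy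
    positivity
  -- measurability
  have hF_meas : ∀ t : ℝ, AEStronglyMeasurable (F t) volume := by
    intro t
    refine (Measurable.indicator ?_ measurableSet_Ioo).aestronglyMeasurable
    have h1 : Measurable fun y : ℝ => T (t*y) / T t :=
      (hT_anti.measurable.comp (measurable_const_mul t)).div_const _
    have h2 : Measurable fun x : ℝ => x ^ c := by measurability
    exact measurable_inv.mul (h2.comp h1)
  -- bound
  have h_bound : ∀ᶠ t : ℝ in atTop, ∀ᵐ y : ℝ, ‖F t y‖ ≤ bound y := by
    filter_upwards [eventually_ge_atTop (max T₀ 1)] with t ht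
    refine MeasureTheory.ae_of_all _ fun y => ?_
    have htT₀ : T₀ ≤ t := le_trans (le_max_left _ _) ht
    have ht1 : (1:ℝ) ≤ t := le_trans (le_max_right _ _) ht
    have ht0 : (0:ℝ) < t := lt_of_lt_of_le one_pos ht1
    by_cases hy : y ∈ Set.Ioo (1:ℝ) (u t / t)
    · have hy1 : 1 < y := hy.1
      have hy0 : 0 < y := lt_trans one_pos hy1
      have hty : (1:ℝ) ≤ t * y := le_trans ht1 (le_mul_of_one_le_right ht0.le hy1.le)
      simp only [hF, hbound]
      rw [Set.indicator_of_mem hy, Set.indicator_of_mem (Set.mem_Ioi.2 hy1),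
          hT_eq _ hty, hT_eq _ ht1]
      have hrat : 0 ≤ S (t*y) / S t := div_nonneg (hS_pos _ (by positivity)).le (hS_pos _ ht0).le
      have hnn : 0 ≤ y⁻¹ * (S (t*y) / S t) ^ c := by positivity
      rw [Real.norm_eq_abs, abs_of_nonneg hnn]
      have hP : S (t*y) / S t ≤ C * y ^ (-δ) := by
        have := hPotter t htT₀ y hy1.le
        rwa [← hδ] at this
      have step1 : (S (t*y) / S t) ^ c ≤ (C * y ^ (-δ)) ^ c :=
        Real.rpow_le_rpow hrat hP hc0.le
      have step2 : y⁻¹ * (S (t*y) / S t) ^ c ≤ y⁻¹ * (C * y ^ (-δ)) ^ c :=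
        mul_le_mul_of_nonneg_left step1 (by positivity)
      refine le_trans step2 (le_of_eq ?_)
      have hC0 : (0:ℝ) < C := lt_of_lt_of_le one_pos hC1
      rw [Real.mul_rpow hC0.le (Real.rpow_nonneg hy0.le _), ← Real.rpow_mul hy0.le,
          ← Real.rpow_neg_one y, ← mul_assoc, mul_comm (y ^ (-1:ℝ)) (C ^ c), mul_assoc,
          ← Real.rpow_add hy0]
      congr 1
      ring
    · simp only [hF]
      rw [Set.indicator_of_notMem hy, norm_zero]
      exact hbound_nonneg y
  -- integrability of the bound
  have ha : -(1 + c * δ) < -1 := by nlinarith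
  have h_int : Integrable bound volume := by
    rw [hbound, integrable_indicator_iff measurableSet_Ioi]
    exact (integrableOn_Ioi_rpow_of_lt ha one_pos).const_mul _
  -- pointwise limit
  have h_lim : ∀ y : ℝ, Tendsto (fun t => F t y) atTop (nhds (f y)) := by
    intro y
    by_cases hy1 : 1 < y
    · have hy0 : 0 < y := lt_trans one_pos hy1
      have hfy : f y = y⁻¹ * (y ^ (-(1/γ₁))) ^ c := by
        rw [hf, Set.indicator_of_mem (Set.mem_Ioi.2 hy1), ← Real.rpow_mul hy0.le,
            ← Real.rpow_neg_one y, ← Real.rpow_add hy0]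
        congr 1
        field_simp
        ring
      rw [hfy]
      have hLy : (0:ℝ) < y ^ (-(1/γ₁)) := Real.rpow_pos_of_pos hy0 _
      have h1 : Tendsto (fun t : ℝ => (S (t * y) / S t) ^ c) atTop
          (nhds ((y ^ (-(1/γ₁))) ^ c)) :=
        ((Real.continuousAt_rpow_const _ c (Or.inl hLy.ne')).tendsto).comp (hRV y hy0)
      have h2 : Tendsto (fun t : ℝ => y⁻¹ * (S (t * y) / S t) ^ c) atTop
          (nhds (y⁻¹ * (y ^ (-(1/γ₁))) ^ c)) := h1.const_mul _
      refine h2.congr' ?_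
      filter_upwards [eventually_ge_atTop (1:ℝ), hu.eventually_gt_atTop y] with t ht1 htu
      have ht0 : (0:ℝ) < t := lt_of_lt_of_le one_pos ht1
      have hty : (1:ℝ) ≤ t * y := le_trans ht1 (le_mul_of_one_le_right ht0.le hy1.le)
      simp only [hF]
      rw [Set.indicator_of_mem (Set.mem_Ioo.2 ⟨hy1, htu⟩), hT_eq _ hty, hT_eq _ ht1]
    · have hfy : f y = 0 := Set.indicator_of_notMem (by simpa using hy1) _
      rw [hfy]
      refine tendsto_const_nhds.congr fun t => ?_
      simp only [hF]
      exact (Set.indicator_of_notMem (fun h => hy1 h.1) _).symm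
  -- DCT
  have hmain : Tendsto (fun t : ℝ => ∫ y, F t y) atTop (nhds (∫ y, f y)) :=
    tendsto_integral_filter_of_dominated_convergence bound
      (Filter.Eventually.of_forall hF_meas) h_bound h_int
      (MeasureTheory.ae_of_all _ h_lim)
  -- value of the limit integral
  have ha2 : -(1 + c / γ₁) < -1 := by
    have : 0 < c / γ₁ := div_pos hc0 hγ₁
    linarith
  have hval : (∫ y, f y) = γ₁ / c := by
    rw [hf, integral_indicator measurableSet_Ioi, integral_Ioi_rpow_of_lt ha2 one_pos,
        Real.one_rpow]
    have hne : -(1 + c / γ₁) + 1 ≠ 0 := by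
      have : 0 < c / γ₁ := div_pos hc0 hγ₁
      intro h; nlinarith
    field_simp
    rw [show -(γ₁ + c) + γ₁ = -c by ring, div_neg, div_self hc0.ne', neg_neg]
  rw [hval] at hmain
  have hfinal : Tendsto (fun t : ℝ => c * ∫ y, F t y) atTop (nhds (c * (γ₁ / c))) :=
    hmain.const_mul c
  rw [mul_div_cancel₀ _ hc0.ne'] at hfinal
  refine hfinal.congr' ?_
  filter_upwards [eventually_ge_atTop (1:ℝ)] with t ht1
  have ht0 : (0:ℝ) < t := lt_of_lt_of_le one_pos ht1
  have : (∫ y, F t y) = ∫ y in Set.Ioo (1:ℝ) (u t / t), y⁻¹ * (S (t*y) / S t) ^ c := by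
    simp only [hF]
    rw [MeasureTheory.integral_indicator measurableSet_Ioo]
    refine MeasureTheory.setIntegral_congr_fun measurableSet_Ioo fun y hy => ?_
    have hty : (1:ℝ) ≤ t * y := le_trans ht1 (le_mul_of_one_le_right ht0.le hy.1.le)
    rw [hT_eq _ hty, hT_eq _ ht1]
  rw [this, hc]
end

section
/- Let 1/2 < p < 1, β > 1 and γ₁ > 0. Then p/(2p−1) > 1, and β²γ₁²/(p(2β−1)) − pγ₁²/(2p−1) = (β−p)(2pβ−p−β)·γ₁²/(p(2p−1)(2β−1)). Moreover, if in addition β < p/(2p−1), then β²γ₁²/(p(2β−1)) − pγ₁²/(2p−1) < 0. -/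
/-- **Variance comparison in the weak censoring regime.**
For `1/2 < p < 1`, `β > 1` and `γ₁ > 0`: `p/(2p−1) > 1`,
`β²γ₁²/(p(2β−1)) − pγ₁²/(2p−1) = (β−p)(2pβ−p−β)γ₁²/(p(2p−1)(2β−1))`, and if moreover
`β < p/(2p−1)` then `β²γ₁²/(p(2β−1)) − pγ₁²/(2p−1) < 0`. -/
theorem variance_comparison_weak_censoring (p β γ₁ : ℝ)
    (hp : 1 / 2 < p) (hp1 : p < 1) (hβ : 1 < β) (hγ₁ : 0 < γ₁) :
    1 < p / (2 * p - 1) ∧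
    β ^ 2 * γ₁ ^ 2 / (p * (2 * β - 1)) - p * γ₁ ^ 2 / (2 * p - 1) =
      (β - p) * (2 * p * β - p - β) * γ₁ ^ 2 / (p * (2 * p - 1) * (2 * β - 1)) ∧
    (β < p / (2 * p - 1) →
      β ^ 2 * γ₁ ^ 2 / (p * (2 * β - 1)) - p * γ₁ ^ 2 / (2 * p - 1) < 0) := by
  have h2p : 0 < 2 * p - 1 := by linarith
  have hp0 : 0 < p := by linarith
  have h2β : 0 < 2 * β - 1 := by linarith
  have heq : β ^ 2 * γ₁ ^ 2 / (p * (2 * β - 1)) - p * γ₁ ^ 2 / (2 * p - 1) =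
      (β - p) * (2 * p * β - p - β) * γ₁ ^ 2 / (p * (2 * p - 1) * (2 * β - 1)) := by
    rw [div_sub_div _ _ (by positivity) h2p.ne', div_eq_div_iff (by positivity) (by positivity)]
    ring
  refine ⟨by rw [lt_div_iff₀ h2p]; linarith, heq, fun hlt => ?_⟩
  rw [heq]
  apply div_neg_of_neg_of_pos
  · have h1 : 2 * p * β - p - β < 0 := by
      have := (lt_div_iff₀ h2p).mp hlt
      nlinarith
    have h2 : 0 < β - p := by linarith
    have := mul_neg_of_pos_of_neg h2 h1
    exact mul_neg_of_neg_of_pos this (pow_pos hγ₁ 2)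
  · positivity
end
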